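/- Let M_ℝ = ⊕_{i∈I} ⊕_{1≤k≤d_i} ℝ·e_{ik} with the standard pairing against the dual lattice, and suppose B ⊂ M_ℝ is a finite set of vectors each of which is of the form ±e_{ik} or e_{ik} − e_{i'k'}. Let χ_0 = Σ_{i,k} e_{ik}. Then for every proper linear subspace H ⊊ M_ℝ there exists a cocharacter λ (an integer vector (λ_{ik})) such that ⟨λ, β⟩ = 0 for all β ∈ B ∩ H and ⟨λ, χ_0⟩ > 0. -/

import Mathlib

/-!
Take `λ_i = 0` if `e_i ∈ H` and `λ_i = 1` otherwise. Since `H` is proper, some `e_i ∉ H`, so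
`⟨λ, χ₀⟩ > 0`. A vector `±e_i ∈ H` forces `e_i ∈ H`, and `e_i - e_j ∈ H` forces `e_i` and
`e_j` to lie both in or both outside `H`; in either case `⟨λ, β⟩ = 0`.
-/

open Matrix

section

variable {R ι : Type*} [DecidableEq ι] [Ring R]

theorem exists_single_one_notMem_of_ne_top [Finite ι] {H : Submodule R (ι → R)}
    (hH : H ≠ ⊤) : ∃ i, Pi.single i (1 : R) ∉ H := by
  by_contra! h
  refine hH (eq_top_iff.2 ?_)
  rw [← (Pi.basisFun R ι).span_eq, Submodule.span_le]
  rintro _ ⟨i, rfl⟩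
  simpa using h i

theorem Submodule.mem_iff_mem_of_sub_mem {M : Type*} [AddCommGroup M] [Module R M]
    {H : Submodule R M} {x y : M} (h : x - y ∈ H) : x ∈ H ↔ y ∈ H :=
  ⟨fun hx => (H.sub_mem_iff_right hx).1 h, fun hy => (H.sub_mem_iff_left hy).1 h⟩

open Classical in
noncomputable def outsideIndicator (H : Submodule R (ι → R)) (i : ι) : ℤ :=
  if Pi.single i (1 : R) ∈ H then 0 else 1

variable {H : Submodule R (ι → R)}

theorem outsideIndicator_nonneg (i : ι) : 0 ≤ outsideIndicator H i := by
  unfold outsideIndicator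
  split_ifs <;> norm_num

theorem outsideIndicator_eq_zero_iff {i : ι} :
    outsideIndicator H i = 0 ↔ Pi.single i (1 : R) ∈ H := by
  by_cases hi : Pi.single i (1 : R) ∈ H <;> simp [outsideIndicator, hi]

variable [Fintype ι]

theorem outsideIndicator_dotProduct_eq_zero {β : ι → R} (hβH : β ∈ H)
    (hβ : (∃ i, β = Pi.single i 1 ∨ β = -Pi.single i 1) ∨
      ∃ i j, β = Pi.single i 1 - Pi.single j 1) :
    (fun k => (outsideIndicator H k : R)) ⬝ᵥ β = 0 := by
  rcases hβ with ⟨i, rfl | rfl⟩ | ⟨i, j, rfl⟩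
  · simp [outsideIndicator_eq_zero_iff.2 hβH]
  · have hi : Pi.single i (1 : R) ∈ H := by simpa using H.neg_mem hβH
    simp [outsideIndicator_eq_zero_iff.2 hi]
  · have hij : outsideIndicator H i = outsideIndicator H j := by
      classical
      rw [outsideIndicator, outsideIndicator,
        if_congr (Submodule.mem_iff_mem_of_sub_mem hβH) rfl rfl]
    rw [dotProduct_sub, dotProduct_single_one, dotProduct_single_one, hij, sub_self]

theorem sum_outsideIndicator_pos (hH : H ≠ ⊤) : 0 < ∑ i, outsideIndicator H i := by
  obtain ⟨i, hi⟩ := exists_single_one_notMem_of_ne_top hH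
  refine Finset.sum_pos' (fun k _ => outsideIndicator_nonneg k) ⟨i, Finset.mem_univ i, ?_⟩
  exact (outsideIndicator_nonneg i).lt_of_ne' (mt outsideIndicator_eq_zero_iff.1 hi)

end

/-- In `M_ℝ = ⊕ ℝ·e_i` with standard pairing, if every element of the finite set `B`
is of the form `±e_i` or `e_i − e_j`, and `χ₀ = Σ e_i`, then for every proper linear
subspace `H ⊊ M_ℝ` there is an integral cocharacter `λ` with `⟨λ, β⟩ = 0` for all
`β ∈ B ∩ H` and `⟨λ, χ₀⟩ > 0`. -/
theorem exists_cocharacter_generic {ι : Type*} [Fintype ι] [DecidableEq ι]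
    (B : Finset (ι → ℝ))
    (hB : ∀ β ∈ B, (∃ i, β = Pi.single i 1 ∨ β = -Pi.single i 1) ∨
      ∃ i j, β = Pi.single i 1 - Pi.single j 1)
    (H : Submodule ℝ (ι → ℝ)) (hH : H ≠ ⊤) :
    ∃ lam : ι → ℤ,
      (∀ β ∈ B, β ∈ H → ∑ i, (lam i : ℝ) * β i = 0) ∧
      0 < ∑ i, (lam i : ℝ) :=
  ⟨outsideIndicator H,
    fun β hβ hβH => outsideIndicator_dotProduct_eq_zero hβH (hB β hβ),
    by exact_mod_cast sum_outsideIndicator_pos hH⟩
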